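/- arXiv:math/0305360 — 6 statements merged into one kernel-verified Lean document; each statement's English description precedes it below -/
import Mathlib

section
/- For integers e_1 < e_2 (with e_1 ≥ 1), the identity Σ_{(a,b): e_2 b > a ≥ e_1 b, b ≥ 1} X^a Y^b = Y(X^{e_1} - X^{e_2})/((1-YX^{e_1})(1-YX^{e_2})(1-X)) holds as formal power series. -/
/-! For fixed `b` the inner sum over `a` is the finite geometric sum over `[e₁ b, e₂ b)`, namely
`((Y X^e₁)^b - (Y X^e₂)^b) / (1 - X)`. The double series is absolutely convergent, so it may be summed
over `b` last, which leaves two geometric series in `Y X^e₁` and `Y X^e₂`. -/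

open Finset

theorem Summable.tsum_prod_swap {α β γ : Type*} [AddCommGroup α] [UniformSpace α]
    [IsUniformAddGroup α] [CompleteSpace α] [T0Space α] {f : β × γ → α} (hf : Summable f) :
    ∑' p, f p = ∑' (c) (b), f (b, c) := by
  rw [← (Equiv.prodComm γ β).tsum_eq]
  exact hf.prod_symm.tsum_prod

theorem summable_ite_pow_mul_pow {𝕜 : Type*} [NormedField 𝕜] [CompleteSpace 𝕜]
    (p : ℕ × ℕ → Prop) [DecidablePred p] {x y : 𝕜} (hx : ‖x‖ < 1) (hy : ‖y‖ < 1) :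
    Summable fun q : ℕ × ℕ ↦ if p q then x ^ q.1 * y ^ q.2 else 0 := by
  have hxy : Summable fun q : ℕ × ℕ ↦ ‖x ^ q.1 * y ^ q.2‖ :=
    (summable_norm_geometric_of_norm_lt_one hx).mul_norm
      (summable_norm_geometric_of_norm_lt_one hy)
  refine hxy.of_norm_bounded fun q ↦ ?_
  split_ifs
  exacts [le_rfl, norm_zero.trans_le (norm_nonneg _)]

theorem mem_Ico_mul_iff_and_one_le {e₁ e₂ a b : ℕ} :
    a ∈ Ico (e₁ * b) (e₂ * b) ↔ e₁ * b ≤ a ∧ a < e₂ * b ∧ 1 ≤ b := by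
  rw [mem_Ico, and_congr_right_iff]
  intro _
  refine ⟨fun ha ↦ ⟨ha, Nat.pos_of_ne_zero ?_⟩, And.left⟩
  rintro rfl
  simp at ha

theorem tsum_ite_Ico_mul_pow_mul_pow {K : Type*} [Field K] [TopologicalSpace K] {e₁ e₂ : ℕ}
    (h : e₁ ≤ e₂) {x : K} (hx : x ≠ 1) (y : K) (b : ℕ) :
    ∑' a : ℕ, (if e₁ * b ≤ a ∧ a < e₂ * b ∧ 1 ≤ b then x ^ a * y ^ b else 0) =
      ((y * x ^ e₁) ^ b - (y * x ^ e₂) ^ b) / (1 - x) := by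
  have hx1 : x - 1 ≠ 0 := sub_ne_zero.2 hx
  have h1x : 1 - x ≠ 0 := sub_ne_zero.2 hx.symm
  calc ∑' a : ℕ, (if e₁ * b ≤ a ∧ a < e₂ * b ∧ 1 ≤ b then x ^ a * y ^ b else 0)
      = ∑ a ∈ Ico (e₁ * b) (e₂ * b), x ^ a * y ^ b := by
        rw [sum_eq_tsum_indicator]
        simp only [Set.indicator_apply, mem_coe, mem_Ico_mul_iff_and_one_le]
    _ = _ := by
        rw [← sum_mul, geom_sum_Ico hx (Nat.mul_le_mul_right b h), mul_pow, mul_pow, ← pow_mul,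
          ← pow_mul]
        field_simp
        ring

theorem ne_one_of_norm_lt_one {R : Type*} [NormedRing R] [NormOneClass R] {x : R}
    (hx : ‖x‖ < 1) : x ≠ 1 := by
  rintro rfl
  simp at hx

theorem cone_sum_between_general (e₁ e₂ : ℕ) (h : e₁ < e₂) (X Y : ℝ)
    (hX : |X| < 1) (hY : |Y| < 1) :
    ∑' q : ℕ × ℕ,
        (if e₁ * q.2 ≤ q.1 ∧ q.1 < e₂ * q.2 ∧ 1 ≤ q.2 then X ^ q.1 * Y ^ q.2 else 0) =
      Y * (X ^ e₁ - X ^ e₂) / ((1 - Y * X ^ e₁) * (1 - Y * X ^ e₂) * (1 - X)) := by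
  rw [← Real.norm_eq_abs] at hX hY
  have hYX (e : ℕ) : ‖Y * X ^ e‖ < 1 :=
    calc ‖Y * X ^ e‖ = ‖Y‖ * ‖X‖ ^ e := by rw [norm_mul, norm_pow]
      _ ≤ ‖Y‖ := mul_le_of_le_one_right (norm_nonneg Y) (pow_le_one₀ (norm_nonneg X) hX.le)
      _ < 1 := hY
  rw [(summable_ite_pow_mul_pow _ hX hY).tsum_prod_swap]
  simp only [tsum_ite_Ico_mul_pow_mul_pow h.le (ne_one_of_norm_lt_one hX)]
  have hs (e : ℕ) := summable_geometric_of_norm_lt_one (hYX e)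
  have hne (e : ℕ) : 1 - Y * X ^ e ≠ 0 := sub_ne_zero.2 (ne_one_of_norm_lt_one (hYX e)).symm
  have h1X : 1 - X ≠ 0 := sub_ne_zero.2 (ne_one_of_norm_lt_one hX).symm
  rw [tsum_div_const, (hs e₁).tsum_sub (hs e₂), tsum_geometric_of_norm_lt_one (hYX e₁),
    tsum_geometric_of_norm_lt_one (hYX e₂), inv_sub_inv (hne e₁) (hne e₂)]
  field_simp
  ring

/-- `Σ_{e₂b > a ≥ e₁b, b ≥ 1} X^a Y^b
      = Y(X^{e₁} - X^{e₂})/((1-YX^{e₁})(1-YX^{e₂})(1-X))`. -/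
theorem cone_sum_between (e₁ e₂ : ℕ) (he₁ : 1 ≤ e₁) (h : e₁ < e₂) (X Y : ℝ)
    (hX : |X| < 1) (hY : |Y| < 1) :
    ∑' q : ℕ × ℕ,
        (if e₁ * q.2 ≤ q.1 ∧ q.1 < e₂ * q.2 ∧ 1 ≤ q.2 then X ^ q.1 * Y ^ q.2 else 0) =
      Y * (X ^ e₁ - X ^ e₂) / ((1 - Y * X ^ e₁) * (1 - Y * X ^ e₂) * (1 - X)) :=
  cone_sum_between_general e₁ e₂ h X Y hX hY
end

section
/- Let r ≥ 1, e ≥ 1 be integers and let n be any integer (playing the role of n_{f,p}). Define P_1(X,Y) = (1 - X^{2r+1}Y^{2r-1})(1 + X^{2r}Y^{2r+1})(1 - X^{(2r+1)e-1}Y^{(2r-1)e}) and P_2(X,Y) = X^{2r}Y^{2r-1}(1 - Y^2)(1 - X^{(2r+1)e}Y^{(2r-1)e}), and let A(X,Y) = (P_1 + n P_2)/((1 - X^{2r+1}Y^{2r-1})(1 - X^{2r+1}Y^{2r+1})(1 - X^{(2r+1)e-1}Y^{(2r-1)e})). Then A(X^{-1}, Y^{-1}) = -X · A(X,Y) in Q(X,Y).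 -/
/-!
Put `a = X^(2r+1) Y^(2r-1)`, `b = X^(2r+1) Y^(2r+1)` and `c = X^((2r+1)e-1) Y^((2r-1)e)`. The other
monomials of `A` are `X^(2r) Y^(2r+1) = X⁻¹ b`, `X^(2r) Y^(2r-1) (1 - Y²) = X⁻¹ (a - b)` and
`X^((2r+1)e) Y^((2r-1)e) = X c`, so `A` is a rational function of `X, a, b, c`, and inverting `X` and
`Y` inverts all four. In these variables the numerator picks up the factor `X / (abc)` and the
denominator `(1 - a)(1 - b)(1 - c)` the factor `-1 / (abc)`.
-/

section

variable {K : Type*} [Field K]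

def indecomposableA (r e : ℕ) (n : ℤ) (X Y : K) : K :=
  ((1 - X ^ (2 * r + 1) * Y ^ (2 * r - 1)) * (1 + X ^ (2 * r) * Y ^ (2 * r + 1)) *
        (1 - X ^ ((2 * r + 1) * e - 1) * Y ^ ((2 * r - 1) * e)) +
      (n : K) * (X ^ (2 * r) * Y ^ (2 * r - 1) * (1 - Y ^ 2) *
        (1 - X ^ ((2 * r + 1) * e) * Y ^ ((2 * r - 1) * e)))) /
    ((1 - X ^ (2 * r + 1) * Y ^ (2 * r - 1)) * (1 - X ^ (2 * r + 1) * Y ^ (2 * r + 1)) *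
      (1 - X ^ ((2 * r + 1) * e - 1) * Y ^ ((2 * r - 1) * e)))

/-- `A` in the variables `X, a, b, c` of the header. -/
def reducedA (n : ℤ) (X a b c : K) : K :=
  ((1 - a) * (1 + X⁻¹ * b) * (1 - c) + (n : K) * (X⁻¹ * (a - b) * (1 - X * c))) /
    ((1 - a) * (1 - b) * (1 - c))

theorem reducedA_inv (n : ℤ) {X a b c : K} (hX : X ≠ 0) (ha : a ≠ 0) (hb : b ≠ 0) (hc : c ≠ 0) :
    reducedA n X⁻¹ a⁻¹ b⁻¹ c⁻¹ = -X * reducedA n X a b c := by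
  have habc : (a * b * c)⁻¹ ≠ 0 := by simp [ha, hb, hc]
  have hnum : (1 - a⁻¹) * (1 + X⁻¹⁻¹ * b⁻¹) * (1 - c⁻¹) +
        (n : K) * (X⁻¹⁻¹ * (a⁻¹ - b⁻¹) * (1 - X⁻¹ * c⁻¹)) =
      (a * b * c)⁻¹ * (X * ((1 - a) * (1 + X⁻¹ * b) * (1 - c) +
        (n : K) * (X⁻¹ * (a - b) * (1 - X * c)))) := by
    field_simp
    ring
  have hden : (1 - a⁻¹) * (1 - b⁻¹) * (1 - c⁻¹) =
      (a * b * c)⁻¹ * -((1 - a) * (1 - b) * (1 - c)) := by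
    field_simp
    ring
  rw [reducedA, reducedA, hnum, hden, mul_div_mul_left _ _ habc, div_neg, mul_div_assoc, neg_mul]

theorem indecomposableA_eq_reducedA {r e : ℕ} (hr : 1 ≤ r) (he : 1 ≤ e) (n : ℤ) {X : K}
    (hX : X ≠ 0) (Y : K) :
    indecomposableA r e n X Y =
      reducedA n X (X ^ (2 * r + 1) * Y ^ (2 * r - 1)) (X ^ (2 * r + 1) * Y ^ (2 * r + 1))
        (X ^ ((2 * r + 1) * e - 1) * Y ^ ((2 * r - 1) * e)) := by
  have hY : Y ^ (2 * r + 1) = Y ^ (2 * r - 1) * Y ^ 2 := by rw [← pow_add]; congr 1; omega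
  have hXa : X ^ (2 * r + 1) = X * X ^ (2 * r) := by rw [pow_succ']
  have hXc : X ^ ((2 * r + 1) * e) = X * X ^ ((2 * r + 1) * e - 1) := by
    rw [← pow_succ']; congr 1
    have : 1 ≤ (2 * r + 1) * e := Nat.one_le_iff_ne_zero.mpr (by positivity)
    omega
  rw [indecomposableA, reducedA, hXc, hXa, hY]
  field_simp

end

theorem funeq_indecomposable_even_general (K : Type*) [Field K] (r e : ℕ) (hr : 1 ≤ r) (he : 1 ≤ e)
    (n : ℤ) (X Y : K) (hX : X ≠ 0) (hY : Y ≠ 0) :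
    ((1 - X⁻¹ ^ (2 * r + 1) * Y⁻¹ ^ (2 * r - 1)) * (1 + X⁻¹ ^ (2 * r) * Y⁻¹ ^ (2 * r + 1)) *
          (1 - X⁻¹ ^ ((2 * r + 1) * e - 1) * Y⁻¹ ^ ((2 * r - 1) * e)) +
        (n : K) * (X⁻¹ ^ (2 * r) * Y⁻¹ ^ (2 * r - 1) * (1 - Y⁻¹ ^ 2) *
          (1 - X⁻¹ ^ ((2 * r + 1) * e) * Y⁻¹ ^ ((2 * r - 1) * e)))) /
      ((1 - X⁻¹ ^ (2 * r + 1) * Y⁻¹ ^ (2 * r - 1)) * (1 - X⁻¹ ^ (2 * r + 1) * Y⁻¹ ^ (2 * r + 1)) *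
        (1 - X⁻¹ ^ ((2 * r + 1) * e - 1) * Y⁻¹ ^ ((2 * r - 1) * e))) =
    -X * (((1 - X ^ (2 * r + 1) * Y ^ (2 * r - 1)) * (1 + X ^ (2 * r) * Y ^ (2 * r + 1)) *
          (1 - X ^ ((2 * r + 1) * e - 1) * Y ^ ((2 * r - 1) * e)) +
        (n : K) * (X ^ (2 * r) * Y ^ (2 * r - 1) * (1 - Y ^ 2) *
          (1 - X ^ ((2 * r + 1) * e) * Y ^ ((2 * r - 1) * e)))) /
      ((1 - X ^ (2 * r + 1) * Y ^ (2 * r - 1)) * (1 - X ^ (2 * r + 1) * Y ^ (2 * r + 1)) *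
        (1 - X ^ ((2 * r + 1) * e - 1) * Y ^ ((2 * r - 1) * e)))) := by
  change indecomposableA r e n X⁻¹ Y⁻¹ = -X * indecomposableA r e n X Y
  rw [indecomposableA_eq_reducedA hr he n (inv_ne_zero hX), indecomposableA_eq_reducedA hr he n hX]
  simp only [inv_pow, ← mul_inv]
  exact reducedA_inv n hX (by positivity) (by positivity) (by positivity)

/-- The functional equation `A(X⁻¹,Y⁻¹) = -X·A(X,Y)` for
`A = (P₁ + nP₂)/D` from Proposition 3.6. -/
theorem funeq_indecomposable_even (K : Type*) [Field K] (r e : ℕ) (hr : 1 ≤ r) (he : 1 ≤ e)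
    (n : ℤ) (X Y : K) (hX : X ≠ 0) (hY : Y ≠ 0)
    (hD1 : 1 - X ^ (2 * r + 1) * Y ^ (2 * r - 1) ≠ 0)
    (hD2 : 1 - X ^ (2 * r + 1) * Y ^ (2 * r + 1) ≠ 0)
    (hD3 : 1 - X ^ ((2 * r + 1) * e - 1) * Y ^ ((2 * r - 1) * e) ≠ 0) :
    ((1 - X⁻¹ ^ (2 * r + 1) * Y⁻¹ ^ (2 * r - 1)) * (1 + X⁻¹ ^ (2 * r) * Y⁻¹ ^ (2 * r + 1)) *
          (1 - X⁻¹ ^ ((2 * r + 1) * e - 1) * Y⁻¹ ^ ((2 * r - 1) * e)) +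
        (n : K) * (X⁻¹ ^ (2 * r) * Y⁻¹ ^ (2 * r - 1) * (1 - Y⁻¹ ^ 2) *
          (1 - X⁻¹ ^ ((2 * r + 1) * e) * Y⁻¹ ^ ((2 * r - 1) * e)))) /
      ((1 - X⁻¹ ^ (2 * r + 1) * Y⁻¹ ^ (2 * r - 1)) * (1 - X⁻¹ ^ (2 * r + 1) * Y⁻¹ ^ (2 * r + 1)) *
        (1 - X⁻¹ ^ ((2 * r + 1) * e - 1) * Y⁻¹ ^ ((2 * r - 1) * e))) =
    -X * (((1 - X ^ (2 * r + 1) * Y ^ (2 * r - 1)) * (1 + X ^ (2 * r) * Y ^ (2 * r + 1)) *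
          (1 - X ^ ((2 * r + 1) * e - 1) * Y ^ ((2 * r - 1) * e)) +
        (n : K) * (X ^ (2 * r) * Y ^ (2 * r - 1) * (1 - Y ^ 2) *
          (1 - X ^ ((2 * r + 1) * e) * Y ^ ((2 * r - 1) * e)))) /
      ((1 - X ^ (2 * r + 1) * Y ^ (2 * r - 1)) * (1 - X ^ (2 * r + 1) * Y ^ (2 * r + 1)) *
        (1 - X ^ ((2 * r + 1) * e - 1) * Y ^ ((2 * r - 1) * e)))) :=
  funeq_indecomposable_even_general K r e hr he n X Y hX hY
end

section
/- For a prime p and integer r ≥ 1, the identity 1/((p^2+p+1)(p+1)) + (1/(p+1))·(Σ_{s≥1} p^{(2r+2)s-2}T^{(2r+1)s} + Σ_{t≥1} p^{(4r+2)t-2}T^{(2r+2)t}) + Σ_{s,t≥1} p^{(2r+2)s+(4r+2)t-3}T^{(2r+1)s+(2r+2)t} = (1 + p^{2r}T^{2r+1} + p^{2r+1}T^{2r+1} + p^{4r}T^{2r+2} + p^{4r+1}T^{2r+2} + p^{6r+1}T^{4r+3}) / ((p^2+p+1)(p+1)(1-p^{4r+2}T^{2r+2})(1-p^{2r+2}T^{2r+1}))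 holds. -/
/-- Summation of the geometric series giving `A_off/off(p,T)` in closed form. -/
theorem A_offoff_formula (p r : ℕ) (hp : 2 ≤ p) (hr : 1 ≤ r) (T : ℝ)
    (h1 : |(p : ℝ) ^ (2 * r + 2) * T ^ (2 * r + 1)| < 1)
    (h2 : |(p : ℝ) ^ (4 * r + 2) * T ^ (2 * r + 2)| < 1) :
    1 / (((p : ℝ) ^ 2 + p + 1) * ((p : ℝ) + 1)) +
      (1 / ((p : ℝ) + 1)) *
        ((∑' s : ℕ, (p : ℝ) ^ ((2 * r + 2) * (s + 1) - 2) * T ^ ((2 * r + 1) * (s + 1))) +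
          ∑' t : ℕ, (p : ℝ) ^ ((4 * r + 2) * (t + 1) - 2) * T ^ ((2 * r + 2) * (t + 1))) +
      (∑' q : ℕ × ℕ,
        (p : ℝ) ^ ((2 * r + 2) * (q.1 + 1) + (4 * r + 2) * (q.2 + 1) - 3) *
          T ^ ((2 * r + 1) * (q.1 + 1) + (2 * r + 2) * (q.2 + 1))) =
    (1 + (p : ℝ) ^ (2 * r) * T ^ (2 * r + 1) + (p : ℝ) ^ (2 * r + 1) * T ^ (2 * r + 1) +
        (p : ℝ) ^ (4 * r) * T ^ (2 * r + 2) + (p : ℝ) ^ (4 * r + 1) * T ^ (2 * r + 2) +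
        (p : ℝ) ^ (6 * r + 1) * T ^ (4 * r + 3)) /
      (((p : ℝ) ^ 2 + p + 1) * ((p : ℝ) + 1) * (1 - (p : ℝ) ^ (4 * r + 2) * T ^ (2 * r + 2)) *
        (1 - (p : ℝ) ^ (2 * r + 2) * T ^ (2 * r + 1))) := by
  have hp0 : (p : ℝ) ≠ 0 := Nat.cast_ne_zero.mpr (by omega)
  set X : ℝ := (p : ℝ) ^ (2 * r + 2) * T ^ (2 * r + 1) with hXdef
  set Y : ℝ := (p : ℝ) ^ (4 * r + 2) * T ^ (2 * r + 2) with hYdef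
  have hX : |X| < 1 := h1
  have hY : |Y| < 1 := h2
  have hX1 : (1 : ℝ) - X ≠ 0 := by
    have := (abs_lt.mp hX).2; intro h; nlinarith
  have hY1 : (1 : ℝ) - Y ≠ 0 := by
    have := (abs_lt.mp hY).2; intro h; nlinarith
  -- termwise identifications
  have hfs : ∀ s : ℕ, (p : ℝ) ^ ((2 * r + 2) * (s + 1) - 2) * T ^ ((2 * r + 1) * (s + 1))
      = X ^ (s + 1) * ((p : ℝ) ^ 2)⁻¹ := by
    intro s
    have he : (2 * r + 2) * (s + 1) - 2 = 2 * r + (2 * r + 2) * s := by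
      have h3 : (2 * r + 2) * (s + 1) = (2 * r + (2 * r + 2) * s) + 2 := by ring
      rw [h3]; simp
    rw [he, hXdef]
    field_simp
    ring
  have hft : ∀ t : ℕ, (p : ℝ) ^ ((4 * r + 2) * (t + 1) - 2) * T ^ ((2 * r + 2) * (t + 1))
      = Y ^ (t + 1) * ((p : ℝ) ^ 2)⁻¹ := by
    intro t
    have he : (4 * r + 2) * (t + 1) - 2 = 4 * r + (4 * r + 2) * t := by
      have h3 : (4 * r + 2) * (t + 1) = (4 * r + (4 * r + 2) * t) + 2 := by ring
      rw [h3]; simp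
    rw [he, hYdef]
    field_simp
    ring
  have hfq : ∀ s t : ℕ,
      (p : ℝ) ^ ((2 * r + 2) * (s + 1) + (4 * r + 2) * (t + 1) - 3) *
        T ^ ((2 * r + 1) * (s + 1) + (2 * r + 2) * (t + 1))
      = X ^ (s + 1) * Y ^ (t + 1) * ((p : ℝ) ^ 3)⁻¹ := by
    intro s t
    have he : (2 * r + 2) * (s + 1) + (4 * r + 2) * (t + 1) - 3
        = (6 * r + 1) + (2 * r + 2) * s + (4 * r + 2) * t := by
      have h3 : (2 * r + 2) * (s + 1) + (4 * r + 2) * (t + 1)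
          = ((6 * r + 1) + (2 * r + 2) * s + (4 * r + 2) * t) + 3 := by ring
      rw [h3]; simp
    rw [he, hXdef, hYdef]
    field_simp
    ring
  -- geometric sums
  have hgeomX : ∑' s : ℕ, X ^ (s + 1) = X * (1 - X)⁻¹ := by
    have : ∀ s : ℕ, X ^ (s + 1) = X * X ^ s := fun s => by rw [pow_succ]; ring
    rw [tsum_congr this, tsum_mul_left, tsum_geometric_of_abs_lt_one hX]
  have hgeomY : ∑' t : ℕ, Y ^ (t + 1) = Y * (1 - Y)⁻¹ := by
    have : ∀ t : ℕ, Y ^ (t + 1) = Y * Y ^ t := fun t => by rw [pow_succ]; ring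
    rw [tsum_congr this, tsum_mul_left, tsum_geometric_of_abs_lt_one hY]
  have s1 : (∑' s : ℕ, (p : ℝ) ^ ((2 * r + 2) * (s + 1) - 2) * T ^ ((2 * r + 1) * (s + 1)))
      = X * (1 - X)⁻¹ * ((p : ℝ) ^ 2)⁻¹ := by
    rw [tsum_congr hfs, tsum_mul_right, hgeomX]
  have s2 : (∑' t : ℕ, (p : ℝ) ^ ((4 * r + 2) * (t + 1) - 2) * T ^ ((2 * r + 2) * (t + 1)))
      = Y * (1 - Y)⁻¹ * ((p : ℝ) ^ 2)⁻¹ := by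
    rw [tsum_congr hft, tsum_mul_right, hgeomY]
  -- the double sum
  have hnX : Summable fun s : ℕ => ‖X ^ (s + 1)‖ := by
    have h := (summable_geometric_of_lt_one (abs_nonneg X) hX).mul_left |X|
    refine h.congr fun s => ?_
    rw [norm_pow, Real.norm_eq_abs, pow_succ]; ring
  have hnY : Summable fun t : ℕ => ‖Y ^ (t + 1)‖ := by
    have h := (summable_geometric_of_lt_one (abs_nonneg Y) hY).mul_left |Y|
    refine h.congr fun t => ?_
    rw [norm_pow, Real.norm_eq_abs, pow_succ]; ring
  have s3 : (∑' q : ℕ × ℕ,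
        (p : ℝ) ^ ((2 * r + 2) * (q.1 + 1) + (4 * r + 2) * (q.2 + 1) - 3) *
          T ^ ((2 * r + 1) * (q.1 + 1) + (2 * r + 2) * (q.2 + 1)))
      = X * (1 - X)⁻¹ * (Y * (1 - Y)⁻¹) * ((p : ℝ) ^ 3)⁻¹ := by
    rw [tsum_congr (fun q : ℕ × ℕ => hfq q.1 q.2), tsum_mul_right,
      ← tsum_mul_tsum_of_summable_norm hnX hnY, hgeomX, hgeomY]
  rw [s1, s2, s3]
  -- rewrite the numerator on the right-hand side
  have e1 : (p : ℝ) ^ (2 * r) * T ^ (2 * r + 1) = X * ((p : ℝ) ^ 2)⁻¹ := by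
    rw [hXdef]; field_simp; ring
  have e2 : (p : ℝ) ^ (2 * r + 1) * T ^ (2 * r + 1) = X * ((p : ℝ))⁻¹ := by
    rw [hXdef]; field_simp; ring
  have e3 : (p : ℝ) ^ (4 * r) * T ^ (2 * r + 2) = Y * ((p : ℝ) ^ 2)⁻¹ := by
    rw [hYdef]; field_simp; ring
  have e4 : (p : ℝ) ^ (4 * r + 1) * T ^ (2 * r + 2) = Y * ((p : ℝ))⁻¹ := by
    rw [hYdef]; field_simp; ring
  have e5 : (p : ℝ) ^ (6 * r + 1) * T ^ (4 * r + 3) = X * Y * ((p : ℝ) ^ 3)⁻¹ := by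
    rw [hXdef, hYdef]; field_simp; ring
  rw [e1, e2, e3, e4, e5]
  have hpp : ((p : ℝ) ^ 2 + (p : ℝ) + 1) ≠ 0 := by positivity
  have hp1 : ((p : ℝ) + 1) ≠ 0 := by positivity
  field_simp
  ring
end

section
/- For integers p ≥ 2 and r ≥ 1 the identity Σ_{j=0}^{3} (1-p^{-1})^{n_j - 1} F_j evaluated at the monomial substitutions of Table 2 equals p^{2r}T^{2r-1}(1 - p^{2r+1}T^{2r+1})/((1 - p^{2r+1}T^{2r-1})(1 - p^{2r+2}T^{2r+1})). Explicitly: with F_0 = XYZ/(1-XYZ) at (X,Y,Z)=(p^{2r}T^{2r+1}, T^{-2}, 1); F_1 = X^2YZ^2/((1-XYZ)(1-XZ)) at (p^{2r+1}T^{2r+1}, p^{-1}T^{-2}, 1) with factor (1-p^{-1}); F_2 = X^2Y^2Z/((1-XYZ)(1-XY)) at (p^{2r+1}T^{2r-1}, 1, p^{-1}) with factor (1-p^{-1}); F_3 = X^2YZ(1-X^2YZ)/((1-XYZ)(1-XY)(1-XZ)(1-X)) at (p^{2r+2}T^{2r+1}, p^{-1}T^{-2}, p^{-1}) with factor (1-p^{-1})^2;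 the sum of these four rational functions in T equals the stated closed form. -/
lemma smpt_aux {K : Type*} [Field K] (P T a : K) (hP : P ≠ 0)
    (h0 : 1 - a ≠ 0) (h1 : 1 - P * a ≠ 0) (h2 : 1 - P * T ^ 2 * a ≠ 0)
    (h3 : 1 - P ^ 2 * T ^ 2 * a ≠ 0) :
    a / (1 - a) +
    (1 - P⁻¹) * (a * (P * T ^ 2 * a)) / ((1 - a) * (1 - P * T ^ 2 * a)) +
    (1 - P⁻¹) * (a * (P * a)) / ((1 - a) * (1 - P * a)) +
    (1 - P⁻¹) ^ 2 *
      ((P ^ 2 * T ^ 2 * a) * a * (1 - (P ^ 2 * T ^ 2 * a) * a)) /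
        ((1 - a) * (1 - P * a) * (1 - P * T ^ 2 * a) * (1 - P ^ 2 * T ^ 2 * a)) =
    a * (1 - P * T ^ 2 * a) / ((1 - P * a) * (1 - P ^ 2 * T ^ 2 * a)) := by
  have hPi : (1 - P⁻¹) = (P - 1) / P := by field_simp
  rw [hPi,
    div_add_div _ _ h0 (mul_ne_zero h0 h2),
    div_add_div _ _ (mul_ne_zero h0 (mul_ne_zero h0 h2)) (mul_ne_zero h0 h1),
    div_add_div _ _
      (mul_ne_zero (mul_ne_zero h0 (mul_ne_zero h0 h2)) (mul_ne_zero h0 h1))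
      (mul_ne_zero (mul_ne_zero (mul_ne_zero h0 h1) h2) h3),
    div_eq_div_iff
      (mul_ne_zero
        (mul_ne_zero (mul_ne_zero h0 (mul_ne_zero h0 h2)) (mul_ne_zero h0 h1))
        (mul_ne_zero (mul_ne_zero (mul_ne_zero h0 h1) h2) h3))
      (mul_ne_zero h1 h3)]
  field_simp
  ring


/-- The weighted sum of the four cone generating functions `F_j` under the monomial
substitutions of Table 2 equals
`p^{2r}T^{2r-1}(1 - p^{2r+1}T^{2r+1})/((1 - p^{2r+1}T^{2r-1})(1 - p^{2r+2}T^{2r+1}))`. -/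
theorem smpt_boundary_sum (K : Type*) [Field K] (p r : ℕ) (hp : 2 ≤ p) (hr : 1 ≤ r)
    (T : K) (hT : T ≠ 0) (hpK : (p : K) ≠ 0)
    (h0 : 1 - (p : K) ^ (2 * r) * T ^ (2 * r - 1) ≠ 0)
    (h1 : 1 - (p : K) ^ (2 * r + 1) * T ^ (2 * r - 1) ≠ 0)
    (h2 : 1 - (p : K) ^ (2 * r + 1) * T ^ (2 * r + 1) ≠ 0)
    (h3 : 1 - (p : K) ^ (2 * r + 2) * T ^ (2 * r + 1) ≠ 0) :
    -- j = 0 :  F₀ = XYZ/(1-XYZ) at (p^{2r}T^{2r+1}, T⁻², 1)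
    ((p : K) ^ (2 * r) * T ^ (2 * r + 1) * T⁻¹ ^ 2 * 1) /
        (1 - (p : K) ^ (2 * r) * T ^ (2 * r + 1) * T⁻¹ ^ 2 * 1) +
    -- j = 1 :  (1-p⁻¹)·F₁ = X²YZ²/((1-XYZ)(1-XZ)) at (p^{2r+1}T^{2r+1}, p⁻¹T⁻², 1)
    (1 - (p : K)⁻¹) *
      ((((p : K) ^ (2 * r + 1) * T ^ (2 * r + 1)) ^ 2 * ((p : K)⁻¹ * T⁻¹ ^ 2) * 1 ^ 2) /
        ((1 - (p : K) ^ (2 * r + 1) * T ^ (2 * r + 1) * ((p : K)⁻¹ * T⁻¹ ^ 2) * 1) *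
          (1 - (p : K) ^ (2 * r + 1) * T ^ (2 * r + 1) * 1))) +
    -- j = 2 :  (1-p⁻¹)·F₂ = X²Y²Z/((1-XYZ)(1-XY)) at (p^{2r+1}T^{2r-1}, 1, p⁻¹)
    (1 - (p : K)⁻¹) *
      ((((p : K) ^ (2 * r + 1) * T ^ (2 * r - 1)) ^ 2 * 1 ^ 2 * (p : K)⁻¹) /
        ((1 - (p : K) ^ (2 * r + 1) * T ^ (2 * r - 1) * 1 * (p : K)⁻¹) *
          (1 - (p : K) ^ (2 * r + 1) * T ^ (2 * r - 1) * 1))) +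
    -- j = 3 :  (1-p⁻¹)²·F₃ = X²YZ(1-X²YZ)/((1-XYZ)(1-XY)(1-XZ)(1-X))
    --          at (p^{2r+2}T^{2r+1}, p⁻¹T⁻², p⁻¹)
    (1 - (p : K)⁻¹) ^ 2 *
      ((((p : K) ^ (2 * r + 2) * T ^ (2 * r + 1)) ^ 2 * ((p : K)⁻¹ * T⁻¹ ^ 2) * (p : K)⁻¹ *
          (1 - ((p : K) ^ (2 * r + 2) * T ^ (2 * r + 1)) ^ 2 * ((p : K)⁻¹ * T⁻¹ ^ 2) *
            (p : K)⁻¹)) /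
        ((1 - (p : K) ^ (2 * r + 2) * T ^ (2 * r + 1) * ((p : K)⁻¹ * T⁻¹ ^ 2) * (p : K)⁻¹) *
          (1 - (p : K) ^ (2 * r + 2) * T ^ (2 * r + 1) * ((p : K)⁻¹ * T⁻¹ ^ 2)) *
          (1 - (p : K) ^ (2 * r + 2) * T ^ (2 * r + 1) * (p : K)⁻¹) *
          (1 - (p : K) ^ (2 * r + 2) * T ^ (2 * r + 1)))) =
    (p : K) ^ (2 * r) * T ^ (2 * r - 1) * (1 - (p : K) ^ (2 * r + 1) * T ^ (2 * r + 1)) /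
      ((1 - (p : K) ^ (2 * r + 1) * T ^ (2 * r - 1)) *
        (1 - (p : K) ^ (2 * r + 2) * T ^ (2 * r + 1))) := by
  obtain ⟨s, rfl⟩ : ∃ s, r = s + 1 := ⟨r - 1, (Nat.succ_pred_eq_of_pos hr).symm⟩
  simp only [show 2 * (s + 1) - 1 = 2 * s + 1 by omega,
    show 2 * (s + 1) + 1 = 2 * s + 3 by omega,
    show 2 * (s + 1) + 2 = 2 * s + 4 by omega,
    show 2 * (s + 1) = 2 * s + 2 by omega,
    show 2 * s + 2 + 1 = 2 * s + 3 by omega,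
    show 2 * s + 2 - 1 = 2 * s + 1 by omega,
    show 2 * s + 2 + 2 = 2 * s + 4 by omega] at h0 h1 h2 h3 ⊢
  set P : K := (p : K) with hP
  have e0 : P ^ (2*s+2) * T ^ (2*s+3) * T⁻¹ ^ 2 * 1 = P ^ (2*s+2) * T ^ (2*s+1) := by
    field_simp; ring
  have e1n : (P ^ (2*s+3) * T ^ (2*s+3)) ^ 2 * (P⁻¹ * T⁻¹ ^ 2) * 1 ^ 2 =
      (P ^ (2*s+2) * T ^ (2*s+1)) * (P * T ^ 2 * (P ^ (2*s+2) * T ^ (2*s+1))) := by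
    field_simp; ring
  have e1a : P ^ (2*s+3) * T ^ (2*s+3) * (P⁻¹ * T⁻¹ ^ 2) * 1 =
      P ^ (2*s+2) * T ^ (2*s+1) := by field_simp; ring
  have e1b : P ^ (2*s+3) * T ^ (2*s+3) * 1 =
      P * T ^ 2 * (P ^ (2*s+2) * T ^ (2*s+1)) := by ring
  have e2n : (P ^ (2*s+3) * T ^ (2*s+1)) ^ 2 * 1 ^ 2 * P⁻¹ =
      (P ^ (2*s+2) * T ^ (2*s+1)) * (P * (P ^ (2*s+2) * T ^ (2*s+1))) := by
    field_simp; ring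
  have e2a : P ^ (2*s+3) * T ^ (2*s+1) * 1 * P⁻¹ =
      P ^ (2*s+2) * T ^ (2*s+1) := by field_simp; ring
  have e2b : P ^ (2*s+3) * T ^ (2*s+1) * 1 =
      P * (P ^ (2*s+2) * T ^ (2*s+1)) := by ring
  have e3n : (P ^ (2*s+4) * T ^ (2*s+3)) ^ 2 * (P⁻¹ * T⁻¹ ^ 2) * P⁻¹ =
      (P ^ 2 * T ^ 2 * (P ^ (2*s+2) * T ^ (2*s+1))) * (P ^ (2*s+2) * T ^ (2*s+1)) := by
    field_simp; ring
  have e3a : P ^ (2*s+4) * T ^ (2*s+3) * (P⁻¹ * T⁻¹ ^ 2) * P⁻¹ =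
      P ^ (2*s+2) * T ^ (2*s+1) := by field_simp; ring
  have e3b : P ^ (2*s+4) * T ^ (2*s+3) * (P⁻¹ * T⁻¹ ^ 2) =
      P * (P ^ (2*s+2) * T ^ (2*s+1)) := by field_simp; ring
  have e3c : P ^ (2*s+4) * T ^ (2*s+3) * P⁻¹ =
      P * T ^ 2 * (P ^ (2*s+2) * T ^ (2*s+1)) := by field_simp; ring
  have e3d : P ^ (2*s+4) * T ^ (2*s+3) =
      P ^ 2 * T ^ 2 * (P ^ (2*s+2) * T ^ (2*s+1)) := by ring
  have e4 : P ^ (2*s+3) * T ^ (2*s+3) =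
      P * T ^ 2 * (P ^ (2*s+2) * T ^ (2*s+1)) := by ring
  have e5 : P ^ (2*s+3) * T ^ (2*s+1) =
      P * (P ^ (2*s+2) * T ^ (2*s+1)) := by ring
  rw [e4] at h2
  rw [e5] at h1
  rw [e3d] at h3
  simp only [mul_div_assoc']
  rw [e0, e1n, e1a, e1b, e2n, e2a, e2b, e3n, e3a, e3b, e3c, e3d, e4, e5]
  exact smpt_aux P T (P ^ (2*s+2) * T ^ (2*s+1)) hpK h0 h1 h2 h3
end

section
/- Let A_1(X,Y) = (1 + X^{2r}Y^{2r+1} + X^{2r+1}Y^{2r+1} + X^{4r}Y^{2r+2} + X^{4r+1}Y^{2r+2} + X^{6r+1}Y^{4r+3}) / ((1 - X^{4r+2}Y^{2r+2})(1 - X^{2r+2}Y^{2r+1})). Then A_1(X^{-1},Y^{-1}) = X^3 · A_1(X,Y) in Q(X,Y), for every integer r ≥ 2. -/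
/-- `A₁(X⁻¹,Y⁻¹) = X³·A₁(X,Y)` for the rational function `A₁` of Theorem 1.1. -/
theorem funeq_A1 (K : Type*) [Field K] (r : ℕ) (hr : 2 ≤ r) (X Y : K)
    (hX : X ≠ 0) (hY : Y ≠ 0)
    (hD1 : 1 - X ^ (4 * r + 2) * Y ^ (2 * r + 2) ≠ 0)
    (hD2 : 1 - X ^ (2 * r + 2) * Y ^ (2 * r + 1) ≠ 0) :
    (1 + X⁻¹ ^ (2 * r) * Y⁻¹ ^ (2 * r + 1) + X⁻¹ ^ (2 * r + 1) * Y⁻¹ ^ (2 * r + 1) +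
        X⁻¹ ^ (4 * r) * Y⁻¹ ^ (2 * r + 2) + X⁻¹ ^ (4 * r + 1) * Y⁻¹ ^ (2 * r + 2) +
        X⁻¹ ^ (6 * r + 1) * Y⁻¹ ^ (4 * r + 3)) /
      ((1 - X⁻¹ ^ (4 * r + 2) * Y⁻¹ ^ (2 * r + 2)) *
        (1 - X⁻¹ ^ (2 * r + 2) * Y⁻¹ ^ (2 * r + 1))) =
    X ^ 3 *
      ((1 + X ^ (2 * r) * Y ^ (2 * r + 1) + X ^ (2 * r + 1) * Y ^ (2 * r + 1) +
          X ^ (4 * r) * Y ^ (2 * r + 2) + X ^ (4 * r + 1) * Y ^ (2 * r + 2) +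
          X ^ (6 * r + 1) * Y ^ (4 * r + 3)) /
        ((1 - X ^ (4 * r + 2) * Y ^ (2 * r + 2)) *
          (1 - X ^ (2 * r + 2) * Y ^ (2 * r + 1)))) := by
  have hXi : X⁻¹ ≠ 0 := inv_ne_zero hX
  have hYi : Y⁻¹ ≠ 0 := inv_ne_zero hY
  have kX : ∀ a b c : ℕ, a + b = c → X⁻¹ ^ c * X ^ a = X⁻¹ ^ b := by
    intro a b c h; subst h
    calc X⁻¹ ^ (a + b) * X ^ a = X⁻¹ ^ b * (X⁻¹ * X) ^ a := by rw [pow_add, mul_pow]; ring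
    _ = X⁻¹ ^ b := by rw [inv_mul_cancel₀ hX, one_pow, mul_one]
  have kY : ∀ a b c : ℕ, a + b = c → Y⁻¹ ^ c * Y ^ a = Y⁻¹ ^ b := by
    intro a b c h; subst h
    calc Y⁻¹ ^ (a + b) * Y ^ a = Y⁻¹ ^ b * (Y⁻¹ * Y) ^ a := by rw [pow_add, mul_pow]; ring
    _ = Y⁻¹ ^ b := by rw [inv_mul_cancel₀ hY, one_pow, mul_one]
  have pair : ∀ aX bX cX aY bY cY : ℕ, aX + bX = cX → aY + bY = cY →
      X⁻¹ ^ cX * Y⁻¹ ^ cY * (X ^ aX * Y ^ aY) = X⁻¹ ^ bX * Y⁻¹ ^ bY := by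
    intro aX bX cX aY bY cY hx hy
    calc X⁻¹ ^ cX * Y⁻¹ ^ cY * (X ^ aX * Y ^ aY)
        = (X⁻¹ ^ cX * X ^ aX) * (Y⁻¹ ^ cY * Y ^ aY) := by ring
      _ = X⁻¹ ^ bX * Y⁻¹ ^ bY := by rw [kX _ _ _ hx, kY _ _ _ hy]
  have h1 : (1 - X⁻¹ ^ (4 * r + 2) * Y⁻¹ ^ (2 * r + 2)) =
      -(X⁻¹ ^ (4 * r + 2) * Y⁻¹ ^ (2 * r + 2)) * (1 - X ^ (4 * r + 2) * Y ^ (2 * r + 2)) := by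
    have := pair (4 * r + 2) 0 (4 * r + 2) (2 * r + 2) 0 (2 * r + 2) (by ring) (by ring)
    simp only [pow_zero] at this
    linear_combination -this
  have h2 : (1 - X⁻¹ ^ (2 * r + 2) * Y⁻¹ ^ (2 * r + 1)) =
      -(X⁻¹ ^ (2 * r + 2) * Y⁻¹ ^ (2 * r + 1)) * (1 - X ^ (2 * r + 2) * Y ^ (2 * r + 1)) := by
    have := pair (2 * r + 2) 0 (2 * r + 2) (2 * r + 1) 0 (2 * r + 1) (by ring) (by ring)
    simp only [pow_zero] at this
    linear_combination -this
  have hN : (1 + X⁻¹ ^ (2 * r) * Y⁻¹ ^ (2 * r + 1) + X⁻¹ ^ (2 * r + 1) * Y⁻¹ ^ (2 * r + 1) +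
        X⁻¹ ^ (4 * r) * Y⁻¹ ^ (2 * r + 2) + X⁻¹ ^ (4 * r + 1) * Y⁻¹ ^ (2 * r + 2) +
        X⁻¹ ^ (6 * r + 1) * Y⁻¹ ^ (4 * r + 3)) =
      (X⁻¹ ^ (6 * r + 1) * Y⁻¹ ^ (4 * r + 3)) *
      (1 + X ^ (2 * r) * Y ^ (2 * r + 1) + X ^ (2 * r + 1) * Y ^ (2 * r + 1) +
          X ^ (4 * r) * Y ^ (2 * r + 2) + X ^ (4 * r + 1) * Y ^ (2 * r + 2) +
          X ^ (6 * r + 1) * Y ^ (4 * r + 3)) := by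
    have e1 := pair (2 * r) (4 * r + 1) (6 * r + 1) (2 * r + 1) (2 * r + 2) (4 * r + 3)
      (by ring) (by ring)
    have e2 := pair (2 * r + 1) (4 * r) (6 * r + 1) (2 * r + 1) (2 * r + 2) (4 * r + 3)
      (by ring) (by ring)
    have e3 := pair (4 * r) (2 * r + 1) (6 * r + 1) (2 * r + 2) (2 * r + 1) (4 * r + 3)
      (by ring) (by ring)
    have e4 := pair (4 * r + 1) (2 * r) (6 * r + 1) (2 * r + 2) (2 * r + 1) (4 * r + 3)
      (by ring) (by ring)
    have e5 := pair (6 * r + 1) 0 (6 * r + 1) (4 * r + 3) 0 (4 * r + 3) (by ring) (by ring)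
    simp only [pow_zero] at e5
    linear_combination -(e1 + e2 + e3 + e4 + e5)
  have hA : (X⁻¹ ^ (4 * r + 2) * Y⁻¹ ^ (2 * r + 2)) * (X⁻¹ ^ (2 * r + 2) * Y⁻¹ ^ (2 * r + 1)) ≠ 0 :=
    mul_ne_zero (mul_ne_zero (pow_ne_zero _ hXi) (pow_ne_zero _ hYi))
      (mul_ne_zero (pow_ne_zero _ hXi) (pow_ne_zero _ hYi))
  have hc : (X⁻¹ ^ (6 * r + 1) * Y⁻¹ ^ (4 * r + 3)) /
      ((X⁻¹ ^ (4 * r + 2) * Y⁻¹ ^ (2 * r + 2)) * (X⁻¹ ^ (2 * r + 2) * Y⁻¹ ^ (2 * r + 1))) =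
      X ^ 3 := by
    rw [div_eq_iff hA]
    have e := pair 3 (6 * r + 1) (6 * r + 4) 0 (4 * r + 3) (4 * r + 3) (by ring) (by ring)
    simp only [pow_zero] at e
    have hx64 : X⁻¹ ^ (6 * r + 4) = X⁻¹ ^ (4 * r + 2) * X⁻¹ ^ (2 * r + 2) := by
      rw [← pow_add]; congr 1; ring
    have hy43 : Y⁻¹ ^ (4 * r + 3) = Y⁻¹ ^ (2 * r + 2) * Y⁻¹ ^ (2 * r + 1) := by
      rw [← pow_add]; congr 1; ring
    linear_combination -e + X ^ 3 * Y⁻¹ ^ (4 * r + 3) * hx64 +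
      X ^ 3 * X⁻¹ ^ (4 * r + 2) * X⁻¹ ^ (2 * r + 2) * hy43
  rw [h1, h2, hN]
  rw [show (-(X⁻¹ ^ (4 * r + 2) * Y⁻¹ ^ (2 * r + 2)) * (1 - X ^ (4 * r + 2) * Y ^ (2 * r + 2))) *
      (-(X⁻¹ ^ (2 * r + 2) * Y⁻¹ ^ (2 * r + 1)) * (1 - X ^ (2 * r + 2) * Y ^ (2 * r + 1))) =
      ((X⁻¹ ^ (4 * r + 2) * Y⁻¹ ^ (2 * r + 2)) * (X⁻¹ ^ (2 * r + 2) * Y⁻¹ ^ (2 * r + 1))) *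
      ((1 - X ^ (4 * r + 2) * Y ^ (2 * r + 2)) * (1 - X ^ (2 * r + 2) * Y ^ (2 * r + 1))) from by
    ring]
  rw [mul_div_mul_comm, hc]
end

section
/- Let A_2(X,Y) = (1-Y)(1+Y)X^{2r}Y^{2r-1}(1 + X^{4r+1}Y^{2r+2}) / ((1 - X^{4r+2}Y^{2r+2})(1 - X^{2r+2}Y^{2r+1})(1 - X^{2r+1}Y^{2r-1})). Then A_2(X^{-1},Y^{-1}) = X^4 · A_2(X,Y) in Q(X,Y), for every integer r ≥ 2. -/
/-- `A₂(X⁻¹,Y⁻¹) = X⁴·A₂(X,Y)` for the rational function `A₂` of Theorem 1.1. -/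
theorem funeq_A2 (K : Type*) [Field K] (r : ℕ) (hr : 2 ≤ r) (X Y : K)
    (hX : X ≠ 0) (hY : Y ≠ 0)
    (hD1 : 1 - X ^ (4 * r + 2) * Y ^ (2 * r + 2) ≠ 0)
    (hD2 : 1 - X ^ (2 * r + 2) * Y ^ (2 * r + 1) ≠ 0)
    (hD3 : 1 - X ^ (2 * r + 1) * Y ^ (2 * r - 1) ≠ 0) :
    (1 - Y⁻¹) * (1 + Y⁻¹) * X⁻¹ ^ (2 * r) * Y⁻¹ ^ (2 * r - 1) *
        (1 + X⁻¹ ^ (4 * r + 1) * Y⁻¹ ^ (2 * r + 2)) /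
      ((1 - X⁻¹ ^ (4 * r + 2) * Y⁻¹ ^ (2 * r + 2)) *
        (1 - X⁻¹ ^ (2 * r + 2) * Y⁻¹ ^ (2 * r + 1)) *
        (1 - X⁻¹ ^ (2 * r + 1) * Y⁻¹ ^ (2 * r - 1))) =
    X ^ 4 *
      ((1 - Y) * (1 + Y) * X ^ (2 * r) * Y ^ (2 * r - 1) *
          (1 + X ^ (4 * r + 1) * Y ^ (2 * r + 2)) /
        ((1 - X ^ (4 * r + 2) * Y ^ (2 * r + 2)) * (1 - X ^ (2 * r + 2) * Y ^ (2 * r + 1)) *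
          (1 - X ^ (2 * r + 1) * Y ^ (2 * r - 1)))) := by
  obtain ⟨k, rfl⟩ := Nat.exists_eq_add_of_le hr
  simp only [show 2 * (2 + k) - 1 = 2 * k + 3 from by omega] at hD1 hD2 hD3 ⊢
  simp only [show 2 * (2 + k) = 2 * k + 4 from by omega,
    show 4 * (2 + k) + 1 = 4 * k + 9 from by omega,
    show 2 * (2 + k) + 2 = 2 * k + 6 from by omega,
    show 4 * (2 + k) + 2 = 4 * k + 10 from by omega,
    show 2 * (2 + k) + 1 = 2 * k + 5 from by omega,
    show 2 * k + 4 + 2 = 2 * k + 6 from by omega,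
    show 2 * k + 4 + 1 = 2 * k + 5 from by omega] at hD1 hD2 hD3 ⊢
  have hXn : ∀ n : ℕ, X ^ n ≠ 0 := fun n => pow_ne_zero n hX
  have hYn : ∀ n : ℕ, Y ^ n ≠ 0 := fun n => pow_ne_zero n hY
  have hm : ∀ a b : ℕ, 1 - X⁻¹ ^ a * Y⁻¹ ^ b
      = (X ^ a * Y ^ b - 1) / (X ^ a * Y ^ b) := by
    intro a b
    rw [inv_pow, inv_pow]
    field_simp
  have hp : ∀ a b : ℕ, 1 + X⁻¹ ^ a * Y⁻¹ ^ b
      = (X ^ a * Y ^ b + 1) / (X ^ a * Y ^ b) := by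
    intro a b
    rw [inv_pow, inv_pow]
    field_simp
  have hy1 : 1 - Y⁻¹ = (Y - 1) / Y := by field_simp
  have hy2 : 1 + Y⁻¹ = (Y + 1) / Y := by field_simp
  have hxp : X⁻¹ ^ (2 * k + 4) = 1 / X ^ (2 * k + 4) := by rw [inv_pow, one_div]
  have hyp : Y⁻¹ ^ (2 * k + 3) = 1 / Y ^ (2 * k + 3) := by rw [inv_pow, one_div]
  have hE1 : X ^ (4 * k + 10) * Y ^ (2 * k + 6) - 1 ≠ 0 := by
    intro h; exact hD1 (by linear_combination -h)
  have hE2 : X ^ (2 * k + 6) * Y ^ (2 * k + 5) - 1 ≠ 0 := by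
    intro h; exact hD2 (by linear_combination -h)
  have hE3 : X ^ (2 * k + 5) * Y ^ (2 * k + 3) - 1 ≠ 0 := by
    intro h; exact hD3 (by linear_combination -h)
  rw [hm, hm, hm, hp, hy1, hy2, hxp, hyp]
  conv_rhs => rw [← mul_div_assoc]
  have hmon : ∀ a b : ℕ, X ^ a * Y ^ b ≠ 0 := fun a b => mul_ne_zero (hXn a) (hYn b)
  simp only [div_mul_div_comm]
  rw [div_div_eq_mul_div, div_mul_eq_mul_div, div_div]
  rw [div_eq_div_iff
    (by apply_rules [mul_ne_zero, hXn, hYn, hY, hE1, hE2, hE3])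
    (by apply_rules [mul_ne_zero, hD1, hD2, hD3])]
  ring
end
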